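/- A reconciliation map μ from (T;t,σ) to S is time-consistent if and only if the auxiliary directed graph A₁, with vertex set V(S) ∪ V(T) and edges given by rules (A1), (A2), (A5), is acyclic. -/
import Mathlib


/-- A rooted tree on vertex type `V`, encoded by a parent map.
Edges are directed away from the root; the edge into a non-root vertex `v`
is `(par v, v)`. -/
structure RTree (V : Type*) where
  root : V
  par : V → V
  par_root : par root = root
  par_ne : ∀ v, v ≠ root → par v ≠ v
  reaches : ∀ v, ∃ k, par^[k] v = root

namespace RTree

variable {V : Type*}

/-- `anc T x y` : `x` is a descendant of `y`, i.e. `x ⪯_T y`. -/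
def anc (T : RTree V) (x y : V) : Prop := ∃ k, (T.par)^[k] x = y

/-- strict descendant: `x ≺_T y`. -/
def sanc (T : RTree V) (x y : V) : Prop := T.anc x y ∧ x ≠ y

def IsLeaf (T : RTree V) (v : V) : Prop := ∀ u, T.par u = v → u = v

/-- `x` is a least common ancestor of the set `A`. -/
def IsLca (T : RTree V) (A : Set V) (x : V) : Prop :=
  (∀ a ∈ A, T.anc a x) ∧ ∀ y, (∀ a ∈ A, T.anc a y) → T.anc x y

/-- A time map: strict descendants have strictly larger time stamps. -/
def IsTimeMap (T : RTree V) (τ : V → ℝ) : Prop :=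
  ∀ x y, T.sanc x y → τ y < τ x

end RTree

/-- Event labels: speciation `•`, duplication `□`, HGT `△`, leaf `⊙`. -/
inductive Event where
  | spec | dup | hgt | leaf
deriving DecidableEq

/-- The common setup: a gene tree `T` (vertices `V`) with event labels `t`,
transfer edges `trans` (an edge is recorded by its child endpoint),
a species tree `S` (vertices `W`), the map `sig = σ` assigning to each gene
(leaf of `T`) the species (leaf of `S`) it resides in, and a least common
ancestor function `lca` on the species tree. -/
structure ReconSetup (V W : Type*) where
  T : RTree V
  S : RTree W
  t : V → Event
  trans : Set V
  sig : V → W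
  lca : Set W → W
  trans_ne_root : ∀ v ∈ trans, v ≠ T.root
  trans_hgt : ∀ v ∈ trans, t (T.par v) = Event.hgt
  leaf_iff : ∀ v, T.IsLeaf v ↔ t v = Event.leaf
  sig_leaf : ∀ v, T.IsLeaf v → S.IsLeaf (sig v)
  lca_spec : ∀ A : Set W, A.Nonempty → S.IsLca A (lca A)

/-- lower endpoint of a vertex-or-edge of the species tree
(an edge `(S.par y, y)` is encoded as `Sum.inr y`; a vertex `x` as `Sum.inl x`). -/
def lowPt {W : Type*} : W ⊕ W → W := Sum.elim id id

namespace ReconSetup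

variable {V W : Type*}

/-- ancestor order of the forest `T_{E̅}` obtained by deleting transfer edges. -/
def fanc (R : ReconSetup V W) (x y : V) : Prop :=
  ∃ k, (R.T.par)^[k] x = y ∧ ∀ i < k, (R.T.par)^[i] x ∉ R.trans

def sfanc (R : ReconSetup V W) (x y : V) : Prop := R.fanc x y ∧ x ≠ y

/-- `σ_{T̅}(u)`: the species of the leaves of `T` below `u` in the forest `T_{E̅}`. -/
def sigmaBar (R : ReconSetup V W) (u : V) : Set W :=
  R.sig '' {l | R.T.IsLeaf l ∧ R.fanc l u}

/-- Ancestor order of `S` extended to vertices and edges: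
`z ⪯ (x,y) ↔ z ⪯ y`, `(x,y) ⪯ z ↔ x ⪯ z`, `(x,y) ⪯ (a,b) ↔ y ⪯ b`. -/
def extLE (R : ReconSetup V W) : W ⊕ W → W ⊕ W → Prop
  | Sum.inl a, Sum.inl b => R.S.anc a b
  | Sum.inl a, Sum.inr y => R.S.anc a y
  | Sum.inr y, Sum.inl b => R.S.anc (R.S.par y) b
  | Sum.inr y, Sum.inr z => R.S.anc y z

def extLT (R : ReconSetup V W) (p q : W ⊕ W) : Prop := R.extLE p q ∧ ¬ R.extLE q p

def incomp (R : ReconSetup V W) (p q : W ⊕ W) : Prop := ¬ R.extLE p q ∧ ¬ R.extLE q p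

def IsDupHGT (R : ReconSetup V W) (u : V) : Prop :=
  R.t u = Event.dup ∨ R.t u = Event.hgt

/-- (M1) leaf constraint. -/
def M1 (R : ReconSetup V W) (μ : V → W ⊕ W) : Prop :=
  ∀ u, R.T.IsLeaf u → μ u = Sum.inl (R.sig u)

/-- (M2i) speciation vertices map to the lca of the species below them. -/
def M2i (R : ReconSetup V W) (μ : V → W ⊕ W) : Prop :=
  ∀ u, R.t u = Event.spec → μ u = Sum.inl (R.lca (R.sigmaBar u))

/-- (M2ii) duplication/HGT vertices map to edges of `S`. -/
def M2ii (R : ReconSetup V W) (μ : V → W ⊕ W) : Prop :=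
  ∀ u, R.IsDupHGT u → ∃ y, y ≠ R.S.root ∧ μ u = Sum.inr y

/-- (M2iii) the endpoints of a transfer edge receive incomparable images. -/
def M2iii (R : ReconSetup V W) (μ : V → W ⊕ W) : Prop :=
  ∀ v ∈ R.trans, R.incomp (μ (R.T.par v)) (μ v)

/-- (M3) ancestor constraint within components of `T_{E̅}`. -/
def M3 (R : ReconSetup V W) (μ : V → W ⊕ W) : Prop :=
  ∀ v w, R.sfanc v w →
    ((R.IsDupHGT v ∧ R.IsDupHGT w) → R.extLE (μ v) (μ w)) ∧
    (¬ (R.IsDupHGT v ∧ R.IsDupHGT w) → R.extLT (μ v) (μ w))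

/-- `μ` is a reconciliation map from `(T;t,σ)` to `S`. -/
def IsRecon (R : ReconSetup V W) (μ : V → W ⊕ W) : Prop :=
  R.M1 μ ∧ R.M2i μ ∧ R.M2ii μ ∧ R.M2iii μ ∧ R.M3 μ

/-- (O1) every internal vertex has at least two children. -/
def O1 (R : ReconSetup V W) : Prop :=
  ∀ v, ¬ R.T.IsLeaf v →
    ∃ a b, a ≠ b ∧ R.T.par a = v ∧ R.T.par b = v ∧ a ≠ v ∧ b ≠ v

/-- (O2) every HGT vertex has a transfer child edge and a non-transfer child edge. -/
def O2 (R : ReconSetup V W) : Prop :=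
  ∀ v, R.t v = Event.hgt →
    (∃ c, R.T.par c = v ∧ c ∈ R.trans) ∧ (∃ c, R.T.par c = v ∧ c ≠ v ∧ c ∉ R.trans)

/-- (Σ1) a speciation vertex has two children whose species sets are disjoint. -/
def Sigma1 (R : ReconSetup V W) : Prop :=
  ∀ x, R.t x = Event.spec →
    ∃ v w, v ≠ w ∧ R.T.par v = x ∧ R.T.par w = x ∧ v ≠ x ∧ w ≠ x ∧
      R.sigmaBar v ∩ R.sigmaBar w = ∅

/-- (Σ2) the species sets across a transfer edge are disjoint. -/
def Sigma2 (R : ReconSetup V W) : Prop :=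
  ∀ w ∈ R.trans, R.sigmaBar (R.T.par w) ∩ R.sigmaBar w = ∅

/-- the gene tree is binary. -/
def BinaryT (R : ReconSetup V W) : Prop :=
  ∀ v, ¬ R.T.IsLeaf v →
    ∃ a b, a ≠ b ∧ ∀ c, (R.T.par c = v ∧ c ≠ v) ↔ (c = a ∨ c = b)

/-- the species tree is binary. -/
def BinaryS (R : ReconSetup V W) : Prop :=
  ∀ v, ¬ R.S.IsLeaf v →
    ∃ a b, a ≠ b ∧ ∀ c, (R.S.par c = v ∧ c ≠ v) ↔ (c = a ∨ c = b)

/-- (C1) speciation vertices and leaves get the same time as their image. -/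
def C1 (R : ReconSetup V W) (μ : V → W ⊕ W) (τT : V → ℝ) (τS : W → ℝ) : Prop :=
  ∀ u x, (R.t u = Event.spec ∨ R.t u = Event.leaf) → μ u = Sum.inl x → τT u = τS x

/-- (C2) a vertex mapped into an edge `(x,y)` gets a time strictly between
the times of `x` and `y`. -/
def C2 (R : ReconSetup V W) (μ : V → W ⊕ W) (τT : V → ℝ) (τS : W → ℝ) : Prop :=
  ∀ u y, R.IsDupHGT u → μ u = Sum.inr y → τS (R.S.par y) < τT u ∧ τT u < τS y

/-- `μ` is a time-consistent reconciliation map. -/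
def TimeConsistent (R : ReconSetup V W) (μ : V → W ⊕ W) : Prop :=
  ∃ τT τS, R.T.IsTimeMap τT ∧ R.S.IsTimeMap τS ∧ R.C1 μ τT τS ∧ R.C2 μ τT τS

/-- (D1). -/
def D1 (R : ReconSetup V W) (μ : V → W ⊕ W) (τT : V → ℝ) (τS : W → ℝ) : Prop :=
  ∀ u x, μ u = Sum.inl x → τT u = τS x

/-- (D2). -/
def D2 (R : ReconSetup V W) (τT : V → ℝ) (τS : W → ℝ) : Prop :=
  ∀ u x, R.IsDupHGT u → R.S.anc x (R.lca (R.sigmaBar u)) → τT u < τS x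

/-- (D3), for a transfer edge `(T.par v, v)` with `v ∈ trans`. -/
def D3 (R : ReconSetup V W) (τT : V → ℝ) (τS : W → ℝ) : Prop :=
  ∀ v x, v ∈ R.trans →
    R.S.anc (R.lca (R.sigmaBar (R.T.par v) ∪ R.sigmaBar v)) x → τS x < τT (R.T.par v)

/-- The DTL-scenario axioms (I)-(IV) for a map `γ : V(T) → V(S)`. -/
def DTL (R : ReconSetup V W) (γ : V → W) : Prop :=
  (∀ u, R.T.IsLeaf u → γ u = R.sig u) ∧
  (∀ u v w, v ≠ w → R.T.par v = u → R.T.par w = u → v ≠ u → w ≠ u →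
    ((¬ R.S.sanc (γ u) (γ v) ∧ ¬ R.S.sanc (γ u) (γ w)) ∧
     (R.S.anc (γ v) (γ u) ∨ R.S.anc (γ w) (γ u)))) ∧
  (∀ v, v ≠ R.T.root →
    (v ∈ R.trans ↔ (¬ R.S.anc (γ (R.T.par v)) (γ v) ∧ ¬ R.S.anc (γ v) (γ (R.T.par v))))) ∧
  (∀ u v w, v ≠ w → R.T.par v = u → R.T.par w = u → v ≠ u → w ≠ u →
    ((R.t u = Event.hgt ↔ (v ∈ R.trans ∨ w ∈ R.trans)) ∧
     (R.t u = Event.spec →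
       γ u = R.lca {γ v, γ w} ∧ ¬ R.S.anc (γ v) (γ w) ∧ ¬ R.S.anc (γ w) (γ v)) ∧
     (R.t u = Event.dup → R.S.anc (R.lca {γ v, γ w}) (γ u))))

end ReconSetup

/-- A directed graph (relation) is acyclic: no edge closes a directed cycle. -/
def Acyclic {α : Type*} (r : α → α → Prop) : Prop :=
  ∀ x y, r x y → ¬ Relation.ReflTransGen r y x

/-- The vertex of the auxiliary graph corresponding to a gene-tree vertex:
speciation vertices and leaves are identified with their image in `S`. -/
def toA {V W : Type*} (R : ReconSetup V W) (μ : V → W ⊕ W) (u : V) : V ⊕ W :=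
  if R.t u = Event.spec ∨ R.t u = Event.leaf then Sum.inr (lowPt (μ u)) else Sum.inl u

/-- The auxiliary graph `A₁` with edges (A1), (A2), (A5). -/
inductive A1rel {V W : Type*} (R : ReconSetup V W) (μ : V → W ⊕ W) :
    V ⊕ W → V ⊕ W → Prop
  | a1 (v : V) (hv : v ≠ R.T.root) :
      A1rel R μ (toA R μ (R.T.par v)) (toA R μ v)
  | a2 (y : W) (hy : y ≠ R.S.root) :
      A1rel R μ (Sum.inr (R.S.par y)) (Sum.inr y)
  | a5l (u : V) (y : W) (h : R.IsDupHGT u) (he : μ u = Sum.inr y) :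
      A1rel R μ (Sum.inr (R.S.par y)) (Sum.inl u)
  | a5r (u : V) (y : W) (h : R.IsDupHGT u) (he : μ u = Sum.inr y) :
      A1rel R μ (Sum.inl u) (Sum.inr y)

/-- a reconciliation map `μ` is time-consistent iff the auxiliary
graph `A₁` is acyclic. -/
theorem stmt13 {V W : Type*} [Fintype V] [Fintype W]
    (R : ReconSetup V W) (μ : V → W ⊕ W) (hrec : R.IsRecon μ)
    (hO1 : R.O1) (hO2 : R.O2) (hS1 : R.Sigma1) (hS2 : R.Sigma2) :
    R.TimeConsistent μ ↔ Acyclic (A1rel R μ) := by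
  obtain ⟨hM1, hM2i, hM2ii, hM2iii, hM3⟩ := hrec
  constructor
  · rintro ⟨τT, τS, hT, hS, hC1, hC2⟩
    set f : V ⊕ W → ℝ := Sum.elim τT τS with hf
    have key : ∀ u, f (toA R μ u) = τT u := by
      intro u
      unfold toA
      split
      · rename_i h
        obtain ⟨x, hx⟩ : ∃ x, μ u = Sum.inl x := by
          rcases h with h | h
          · exact ⟨_, hM2i u h⟩
          · exact ⟨_, hM1 u ((R.leaf_iff u).mpr h)⟩
        rw [hx]
        simpa [hf, lowPt] using (hC1 u x h hx).symm
      · simp [hf]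
    have edge_lt : ∀ x y, A1rel R μ x y → f x < f y := by
      intro x y h
      cases h with
      | a1 v hv =>
        rw [key, key]
        exact hT v (R.T.par v) ⟨⟨1, by simp⟩, fun h => R.T.par_ne v hv h.symm⟩
      | a2 y hy =>
        exact hS y (R.S.par y) ⟨⟨1, by simp⟩, fun h => R.S.par_ne y hy h.symm⟩
      | a5l u y hdh he =>
        exact (hC2 u y hdh he).1
      | a5r u y hdh he =>
        exact (hC2 u y hdh he).2
    intro x y hxy hcyc
    have hle : ∀ a b, Relation.ReflTransGen (A1rel R μ) a b → f a ≤ f b := by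
      intro a b hab
      induction hab with
      | refl => exact le_refl _
      | tail h e ih => exact ih.trans (edge_lt _ _ e).le
    exact (edge_lt x y hxy).not_ge (hle y x hcyc)
  · intro hacy
    set r := A1rel R μ with hr
    have irr : ∀ x, ¬ Relation.TransGen r x x := by
      intro x hx
      obtain ⟨c, hxc, hcx⟩ := Relation.TransGen.head'_iff.mp hx
      exact hacy x c hxc hcx
    set g : V ⊕ W → ℕ := fun z => {w | Relation.TransGen r w z}.ncard with hg
    have gmono : ∀ x y, r x y → g x < g y := by
      intro x y hxy
      apply Set.ncard_lt_ncard _ (Set.toFinite _)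
      constructor
      · intro w hw; exact Relation.TransGen.tail hw hxy
      · intro hsub
        exact irr x (hsub (Relation.TransGen.single hxy))
    have gTG : ∀ a b, Relation.TransGen r a b → g a < g b := by
      intro a b h
      induction h with
      | single h => exact gmono _ _ h
      | tail _ e ih => exact ih.trans (gmono _ _ e)
    refine ⟨fun u => (g (toA R μ u) : ℝ), fun x => (g (Sum.inr x) : ℝ), ?_, ?_, ?_, ?_⟩
    · -- time map on T
      have chainT : ∀ k x y, (R.T.par)^[k] x = y →
          x = y ∨ Relation.TransGen r (toA R μ y) (toA R μ x) := by
        intro k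
        induction k with
        | zero => intro x y h; exact Or.inl h
        | succ k ih =>
          intro x y h
          by_cases hx : x = R.T.root
          · left
            subst hx
            rw [Function.iterate_fixed R.T.par_root] at h
            exact h
          · rw [Function.iterate_succ_apply] at h
            rcases ih (R.T.par x) y h with heq | htg
            · right; exact heq ▸ Relation.TransGen.single (A1rel.a1 x hx)
            · right; exact Relation.TransGen.tail htg (A1rel.a1 x hx)
      rintro x y ⟨⟨k, hk⟩, hne⟩
      rcases chainT k x y hk with heq | htg
      · exact absurd heq hne
      · show ((g (toA R μ y) : ℕ) : ℝ) < ((g (toA R μ x) : ℕ) : ℝ)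
        exact_mod_cast gTG _ _ htg
    · -- time map on S
      have chainS : ∀ k (x y : W), (R.S.par)^[k] x = y →
          x = y ∨ Relation.TransGen r (Sum.inr y : V ⊕ W) (Sum.inr x) := by
        intro k
        induction k with
        | zero => intro x y h; exact Or.inl h
        | succ k ih =>
          intro x y h
          by_cases hx : x = R.S.root
          · left
            subst hx
            rw [Function.iterate_fixed R.S.par_root] at h
            exact h
          · rw [Function.iterate_succ_apply] at h
            rcases ih (R.S.par x) y h with heq | htg
            · right; exact heq ▸ Relation.TransGen.single (A1rel.a2 x hx)
            · right; exact Relation.TransGen.tail htg (A1rel.a2 x hx)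
      rintro x y ⟨⟨k, hk⟩, hne⟩
      rcases chainS k x y hk with heq | htg
      · exact absurd heq hne
      · show ((g (Sum.inr y : V ⊕ W) : ℕ) : ℝ) < ((g (Sum.inr x) : ℕ) : ℝ)
        exact_mod_cast gTG _ _ htg
    · -- C1
      intro u x h hx
      have : toA R μ u = Sum.inr x := by
        unfold toA
        rw [if_pos h, hx]
        simp [lowPt]
      show ((g (toA R μ u) : ℕ) : ℝ) = ((g (Sum.inr x : V ⊕ W) : ℕ) : ℝ)
      rw [this]
    · -- C2
      intro u y hdh hy
      have htoA : toA R μ u = Sum.inl u := by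
        unfold toA
        rw [if_neg]
        rintro (h1 | h1) <;> rcases hdh with h2 | h2 <;> rw [h1] at h2 <;>
          exact Event.noConfusion h2
      constructor
      · show ((g (Sum.inr (R.S.par y) : V ⊕ W) : ℕ) : ℝ) < ((g (toA R μ u) : ℕ) : ℝ)
        rw [htoA]
        exact_mod_cast gmono _ _ (A1rel.a5l u y hdh hy)
      · show ((g (toA R μ u) : ℕ) : ℝ) < ((g (Sum.inr y : V ⊕ W) : ℕ) : ℝ)
        rw [htoA]
        exact_mod_cast gmono _ _ (A1rel.a5r u y hdh hy)
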